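/- Let y = X* w* + e_y with X = X* + E ∈ ℝ^{n×p}, let S be the support of w*, and suppose X_SᵀX_S is invertible. If ŵ_S ∈ ℝ^k and ẑ_S ∈ ℝ^k with ‖ẑ_S‖_∞ ≤ 1 satisfy the LASSO stationarity condition (1/n)·X_Sᵀ( X_S(ŵ_S − w*_S) + E_S w*_S − e_y ) + λ·ẑ_S = 0, then ‖ŵ_S − w*_S‖_∞ ≤ |||((1/n)·X_SᵀX_S)^{-1}|||_∞ · ( ‖(1/n)·X_Sᵀ e_y‖_∞ + ‖(1/n)·X_Sᵀ E_S w*_S‖_∞ + λ ). -/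
import Mathlib


open Matrix

noncomputable section

/-- Induced `ℓ∞` matrix norm (maximum over rows of the `ℓ1` norm of the row). -/
def indNorm {α β : Type*} [Fintype α] [Fintype β] (A : Matrix α β ℝ) : ℝ :=
  ⨆ i, ∑ j, |A i j|

/-- Deterministic LASSO error bound on the support.  With `y = X*w* + e_y`, `X = X* + E`,
`S` the support of `w*` and `X_SᵀX_S` invertible, if `ŵ_S`, `ẑ_S` (with `‖ẑ_S‖∞ ≤ 1`)
satisfy the stationarity condition
`(1/n)·X_Sᵀ(X_S(ŵ_S − w*_S) + E_S w*_S − e_y) + λ ẑ_S = 0`, then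
`‖ŵ_S − w*_S‖∞ ≤ |||((1/n)X_SᵀX_S)⁻¹|||∞ (‖(1/n)X_Sᵀe_y‖∞ + ‖(1/n)X_SᵀE_S w*_S‖∞ + λ)`. -/
theorem stmt_18 (n p : ℕ) (hn : 0 < n) (wstar : Fin p → ℝ) (S : Finset (Fin p))
    (hS : ∀ i, i ∈ S ↔ wstar i ≠ 0)
    (Xstar E : Matrix (Fin n) (Fin p) ℝ) (ey : Fin n → ℝ)
    (y : Fin n → ℝ) (hy : y = Xstar *ᵥ wstar + ey)
    (X : Matrix (Fin n) (Fin p) ℝ) (hX : X = Xstar + E)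
    (XS : Matrix (Fin n) {i : Fin p // i ∈ S} ℝ)
    (hXS : XS = X.submatrix id (fun i : {i : Fin p // i ∈ S} => i.1))
    (ES : Matrix (Fin n) {i : Fin p // i ∈ S} ℝ)
    (hES : ES = E.submatrix id (fun i : {i : Fin p // i ∈ S} => i.1))
    (hinv : IsUnit (XSᵀ * XS).det)
    (lam : ℝ) (hlam : 0 < lam)
    (what zhat : {i : Fin p // i ∈ S} → ℝ) (hz : ‖zhat‖ ≤ 1)
    (hstat :
      (n : ℝ)⁻¹ •
          (XSᵀ *ᵥ (XS *ᵥ (what - fun i : {i : Fin p // i ∈ S} => wstar i.1)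
            + ES *ᵥ (fun i : {i : Fin p // i ∈ S} => wstar i.1) - ey))
        + lam • zhat = 0) :
    ‖what - fun i : {i : Fin p // i ∈ S} => wstar i.1‖ ≤
      indNorm (((n : ℝ)⁻¹ • (XSᵀ * XS))⁻¹) *
        (‖(n : ℝ)⁻¹ • (XSᵀ *ᵥ ey)‖
          + ‖(n : ℝ)⁻¹ • (XSᵀ *ᵥ (ES *ᵥ fun i : {i : Fin p // i ∈ S} => wstar i.1))‖
          + lam) := by
  classical
  set w : {i : Fin p // i ∈ S} → ℝ := fun i => wstar i.1 with hw
  set Δ : {i : Fin p // i ∈ S} → ℝ := what - w with hΔ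
  set A : Matrix {i : Fin p // i ∈ S} {i : Fin p // i ∈ S} ℝ := (n : ℝ)⁻¹ • (XSᵀ * XS)
    with hA
  set u : {i : Fin p // i ∈ S} → ℝ :=
    (n : ℝ)⁻¹ • (XSᵀ *ᵥ ey) - (n : ℝ)⁻¹ • (XSᵀ *ᵥ (ES *ᵥ w)) - lam • zhat with hu
  have hnR : (n : ℝ)⁻¹ ≠ 0 := by positivity
  have hAdet : IsUnit A.det := by
    rw [hA, Matrix.det_smul]
    exact (isUnit_iff_ne_zero.2 (pow_ne_zero _ hnR)).mul hinv
  -- A *ᵥ Δ = u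
  have key : A *ᵥ Δ = u := by
    have := hstat
    rw [Matrix.mulVec_sub, Matrix.mulVec_add] at this
    have h2 : (n : ℝ)⁻¹ • (XSᵀ *ᵥ (XS *ᵥ Δ)) = A *ᵥ Δ := by
      rw [hA, Matrix.smul_mulVec, Matrix.mulVec_mulVec]
    rw [smul_sub, smul_add, h2] at this
    rw [hu]
    have := congrArg (fun v => v - (n : ℝ)⁻¹ • (XSᵀ *ᵥ (ES *ᵥ w))
      + (n : ℝ)⁻¹ • (XSᵀ *ᵥ ey) - lam • zhat) this
    linear_combination (norm := (funext i; simp; ring)) this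
  have hΔeq : Δ = A⁻¹ *ᵥ u := by
    rw [← key, Matrix.mulVec_mulVec, Matrix.nonsing_inv_mul A hAdet, Matrix.one_mulVec]
  -- bound on ‖u‖
  have hub : ‖u‖ ≤ ‖(n : ℝ)⁻¹ • (XSᵀ *ᵥ ey)‖ + ‖(n : ℝ)⁻¹ • (XSᵀ *ᵥ (ES *ᵥ w))‖ + lam := by
    rw [hu]
    refine le_trans (norm_sub_le _ _) ?_
    gcongr
    · exact norm_sub_le _ _
    · calc ‖lam • zhat‖ = |lam| * ‖zhat‖ := by rw [norm_smul]; rfl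
        _ ≤ lam * 1 := by
            rw [abs_of_pos hlam]; exact mul_le_mul_of_nonneg_left hz hlam.le
        _ = lam := mul_one lam
  have hind0 : 0 ≤ indNorm A⁻¹ := by
    by_cases hne : Nonempty {i : Fin p // i ∈ S}
    · obtain ⟨i⟩ := hne
      rw [indNorm]
      refine le_trans ?_ (le_ciSup (Set.Finite.bddAbove (Set.finite_range fun i => ∑ j, |A⁻¹ i j|)) i)
      positivity
    · haveI := not_nonempty_iff.1 hne
      simp [indNorm, Real.iSup_of_isEmpty]
  have hC : 0 ≤ ‖(n : ℝ)⁻¹ • (XSᵀ *ᵥ ey)‖ + ‖(n : ℝ)⁻¹ • (XSᵀ *ᵥ (ES *ᵥ w))‖ + lam := by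
    positivity
  have : ‖Δ‖ ≤ indNorm A⁻¹ * (‖(n : ℝ)⁻¹ • (XSᵀ *ᵥ ey)‖
      + ‖(n : ℝ)⁻¹ • (XSᵀ *ᵥ (ES *ᵥ w))‖ + lam) := by
    refine (pi_norm_le_iff_of_nonneg (by positivity)).2 fun i => ?_
    have hiA : ∑ j, |A⁻¹ i j| ≤ indNorm A⁻¹ := by
      rw [indNorm]
      exact le_ciSup (f := fun i => ∑ j, |A⁻¹ i j|)
        (Set.Finite.bddAbove (Set.finite_range _)) i
    have : ‖Δ i‖ ≤ (∑ j, |A⁻¹ i j|) * ‖u‖ := by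
      rw [hΔeq]
      calc ‖(A⁻¹ *ᵥ u) i‖ = |∑ j, A⁻¹ i j * u j| := rfl
        _ ≤ ∑ j, |A⁻¹ i j * u j| := Finset.abs_sum_le_sum_abs _ _
        _ ≤ ∑ j, |A⁻¹ i j| * ‖u‖ := by
            refine Finset.sum_le_sum fun j _ => ?_
            rw [abs_mul]
            exact mul_le_mul_of_nonneg_left (norm_le_pi_norm u j) (abs_nonneg _)
        _ = (∑ j, |A⁻¹ i j|) * ‖u‖ := by rw [← Finset.sum_mul]
    refine this.trans ?_
    have hsum0 : 0 ≤ ∑ j, |A⁻¹ i j| := Finset.sum_nonneg fun j _ => abs_nonneg _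
    calc (∑ j, |A⁻¹ i j|) * ‖u‖ ≤ (∑ j, |A⁻¹ i j|) * (‖(n : ℝ)⁻¹ • (XSᵀ *ᵥ ey)‖
          + ‖(n : ℝ)⁻¹ • (XSᵀ *ᵥ (ES *ᵥ w))‖ + lam) := mul_le_mul_of_nonneg_left hub hsum0
      _ ≤ _ := mul_le_mul_of_nonneg_right hiA hC
  exact this

end
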